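/- Let A be symmetric with smallest eigenvalue d₁ of multiplicity at least r, i.e. d₁ = d_r, and let X be a stationary point of f(X) = ½ tr(XᵀAXC) − tr(BᵀX) over St(n,r) whose multiplier Λ satisfies Λ ⪯ d_r C. Then X is a global minimizer. -/

import Mathlib

open Matrix

private lemma psd_trace_nonneg {m : Type*} [Fintype m] [DecidableEq m]
    {M : Matrix m m ℝ} (hM : M.PosSemidef) : 0 ≤ M.trace := by
  rw [Matrix.trace]
  apply Finset.sum_nonneg
  intro i _
  exact hM.diag_nonneg

open scoped MatrixOrder in
private lemma trace_mul_nonneg_of_psd {m : Type*} [Fintype m] [DecidableEq m]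
    {P Q : Matrix m m ℝ} (hP : P.PosSemidef) (hQ : Q.PosSemidef) :
    0 ≤ (P * Q).trace := by
  obtain ⟨R, rfl⟩ := CStarAlgebra.nonneg_iff_eq_star_mul_self.mp hQ.nonneg
  rw [Matrix.star_eq_conjTranspose]
  have h : (P * (Rᴴ * R)).trace = (R * P * Rᴴ).trace := by
    rw [← Matrix.mul_assoc, Matrix.trace_mul_comm, ← Matrix.mul_assoc]
  rw [h]
  exact psd_trace_nonneg (hP.mul_mul_conjTranspose_same R)

/-- if the smallest eigenvalue `d₁` of symmetric `A` has multiplicity at least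
`r` (i.e. `d₁ = d_r`), then any stationary point `X` of `f(X) = ½ tr(XᵀAXC) − tr(BᵀX)` over
`St(n,r)` whose multiplier satisfies `Λ ⪯ d_rC` is a global minimizer. -/
theorem stmt8 {n r : ℕ} (hr0 : 0 < r) (hrn : r ≤ n)
    (A : Matrix (Fin n) (Fin n) ℝ) (hA : A.IsSymm)
    (V : Matrix (Fin n) (Fin n) ℝ) (d : Fin n → ℝ) (hd : Monotone d)
    (hV : Vᵀ * V = 1) (hAV : A = V * Matrix.diagonal d * Vᵀ)
    (hmult : d (⟨0, by omega⟩ : Fin n) = d (⟨r - 1, by omega⟩ : Fin n))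
    (B : Matrix (Fin n) (Fin r) ℝ)
    (C : Matrix (Fin r) (Fin r) ℝ) (hC : C.PosDef)
    (X : Matrix (Fin n) (Fin r) ℝ) (hX : Xᵀ * X = 1)
    (Λ : Matrix (Fin r) (Fin r) ℝ) (hΛsymm : Λ.IsSymm)
    (hstat : A * X * C - B = X * Λ)
    (hqual : (d (⟨r - 1, by omega⟩ : Fin n) • C - Λ).PosSemidef) :
    ∀ Y : Matrix (Fin n) (Fin r) ℝ, Yᵀ * Y = 1 →
      (1 / 2 : ℝ) * (Xᵀ * A * X * C).trace - (Bᵀ * X).trace ≤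
        (1 / 2 : ℝ) * (Yᵀ * A * Y * C).trace - (Bᵀ * Y).trace := by
  intro Y hY
  set c : ℝ := d (⟨r - 1, by omega⟩ : Fin n) with hc
  -- symmetry facts
  have hAs : Aᵀ = A := hA
  have hΛ : Λᵀ = Λ := hΛsymm
  have hCs : Cᵀ = C := by
    have h := hC.1.eq
    rwa [Matrix.conjTranspose_eq_transpose_of_trivial] at h
  -- A - c • 1 is PSD
  have hVVt : V * Vᵀ = 1 := mul_eq_one_comm.mp hV
  have hdiagpsd : (Matrix.diagonal d - c • (1 : Matrix (Fin n) (Fin n) ℝ)).PosSemidef := by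
    have : Matrix.diagonal d - c • (1 : Matrix (Fin n) (Fin n) ℝ)
        = Matrix.diagonal (fun i => d i - c) := by
      rw [Matrix.smul_one_eq_diagonal, Matrix.diagonal_sub]
    rw [this]
    refine Matrix.posSemidef_diagonal_iff.mpr fun i => ?_
    have h0i : (⟨0, by omega⟩ : Fin n) ≤ i := by
      simp [Fin.le_def]
    have := hd h0i
    rw [hmult] at this
    linarith
  have hApsd : (A - c • (1 : Matrix (Fin n) (Fin n) ℝ)).PosSemidef := by
    have heq : V * (Matrix.diagonal d - c • (1 : Matrix (Fin n) (Fin n) ℝ)) * Vᵀ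
        = A - c • (1 : Matrix (Fin n) (Fin n) ℝ) := by
      rw [Matrix.mul_sub, Matrix.sub_mul, Matrix.mul_smul, Matrix.mul_one, Matrix.smul_mul,
        hVVt, hAV]
    have := hdiagpsd.mul_mul_conjTranspose_same V
    rw [Matrix.conjTranspose_eq_transpose_of_trivial] at this
    rwa [heq] at this
  set E : Matrix (Fin n) (Fin r) ℝ := Y - X with hE
  -- the two nonnegative trace terms
  have hQ1 : (Eᵀ * (A - c • (1 : Matrix (Fin n) (Fin n) ℝ)) * E).PosSemidef := by
    have := hApsd.conjTranspose_mul_mul_same E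
    rwa [Matrix.conjTranspose_eq_transpose_of_trivial] at this
  have hEE : (Eᵀ * E).PosSemidef := by
    have := Matrix.posSemidef_conjTranspose_mul_self E
    rwa [Matrix.conjTranspose_eq_transpose_of_trivial] at this
  have t1 : 0 ≤ (Eᵀ * (A - c • (1 : Matrix (Fin n) (Fin n) ℝ)) * E * C).trace := by
    rw [Matrix.mul_assoc]
    have := trace_mul_nonneg_of_psd hQ1 hC.posSemidef
    rwa [Matrix.mul_assoc] at this
  have t2 : 0 ≤ (Eᵀ * E * (c • C - Λ)).trace := trace_mul_nonneg_of_psd hEE hqual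
  -- expansion of the quadratic form
  have expand : (Eᵀ * (A - c • (1 : Matrix (Fin n) (Fin n) ℝ)) * E * C).trace
      + (Eᵀ * E * (c • C - Λ)).trace
      = (Yᵀ * A * Y * C).trace - (Yᵀ * A * X * C).trace - (Xᵀ * A * Y * C).trace
        + (Xᵀ * A * X * C).trace
        - (Yᵀ * Y * Λ).trace + (Yᵀ * X * Λ).trace + (Xᵀ * Y * Λ).trace
        - (Xᵀ * X * Λ).trace := by
    rw [hE]
    simp only [Matrix.transpose_sub, Matrix.sub_mul, Matrix.mul_sub, Matrix.mul_smul,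
      Matrix.smul_mul, Matrix.mul_one, Matrix.one_mul, Matrix.trace_sub, Matrix.trace_add,
      Matrix.trace_smul, smul_eq_mul]
    ring
  -- trace identities
  have hYYΛ : (Yᵀ * Y * Λ).trace = Λ.trace := by rw [hY, Matrix.one_mul]
  have hXXΛ : (Xᵀ * X * Λ).trace = Λ.trace := by rw [hX, Matrix.one_mul]
  have hXAY : (Xᵀ * A * Y * C).trace = (Yᵀ * A * X * C).trace := by
    rw [← Matrix.trace_transpose (Xᵀ * A * Y * C)]
    simp only [Matrix.transpose_mul, Matrix.transpose_transpose, hAs, hCs]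
    rw [Matrix.trace_mul_comm]
    simp [Matrix.mul_assoc]
  have hXYΛ : (Xᵀ * Y * Λ).trace = (Yᵀ * X * Λ).trace := by
    rw [← Matrix.trace_transpose (Xᵀ * Y * Λ)]
    simp only [Matrix.transpose_mul, Matrix.transpose_transpose, hΛ]
    rw [Matrix.trace_mul_comm]
  have hsub : A * (X * C) = B + X * Λ := by
    rw [← Matrix.mul_assoc, ← hstat]
    abel
  have hBY : (Yᵀ * B).trace = (Bᵀ * Y).trace := by
    rw [← Matrix.trace_transpose (Yᵀ * B)]
    simp only [Matrix.transpose_mul, Matrix.transpose_transpose]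
  have hBX : (Xᵀ * B).trace = (Bᵀ * X).trace := by
    rw [← Matrix.trace_transpose (Xᵀ * B)]
    simp only [Matrix.transpose_mul, Matrix.transpose_transpose]
  have e1 : (Yᵀ * A * X * C).trace = (Bᵀ * Y).trace + (Yᵀ * X * Λ).trace := by
    have h : Yᵀ * A * X * C = Yᵀ * B + Yᵀ * X * Λ := by
      rw [Matrix.mul_assoc (Yᵀ * A) X C, Matrix.mul_assoc Yᵀ A (X * C), hsub,
        Matrix.mul_add, Matrix.mul_assoc]
    rw [h, Matrix.trace_add, hBY]
  have e2 : (Xᵀ * A * X * C).trace = (Bᵀ * X).trace + Λ.trace := by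
    have h : Xᵀ * A * X * C = Xᵀ * B + Xᵀ * X * Λ := by
      rw [Matrix.mul_assoc (Xᵀ * A) X C, Matrix.mul_assoc Xᵀ A (X * C), hsub,
        Matrix.mul_add, Matrix.mul_assoc]
    rw [h, Matrix.trace_add, hBX, hX, Matrix.one_mul]
  linarith [t1, t2, expand]
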